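/- arXiv:math/0201174 — 2 statements merged into one kernel-verified Lean document; each statement's English description precedes it below -/
import Mathlib

section
/- Let M be a matroid on a linearly ordered ground set E and x the maximal element of E (assumed not a loop). A set X ⊆ E \ {x} is a no-broken-circuit set of the deletion M \ x if and only if X is a no-broken-circuit set of M. -/
open scoped BigOperators
open scoped Matroid

/-- A circuit: a minimal dependent set. -/
def IsCircuit {n : ℕ} (M : Matroid (Fin n)) (C : Finset (Fin n)) : Prop :=
  M.Dep ↑C ∧ ∀ D : Finset (Fin n), D ⊂ C → ¬ M.Dep ↑D

/-- A broken circuit: a circuit (of size > 1) with its minimum removed. -/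
def IsBrokenCircuit {n : ℕ} (M : Matroid (Fin n)) (B : Finset (Fin n)) : Prop :=
  ∃ (C : Finset (Fin n)) (a : Fin n), IsCircuit M C ∧ 1 < C.card ∧ a ∈ C ∧
    (∀ b ∈ C, a ≤ b) ∧ B = C.erase a

/-- A no-broken-circuit set. -/
def NBCSet {n : ℕ} (M : Matroid (Fin n)) (I : Finset (Fin n)) : Prop :=
  M.Indep ↑I ∧ ∀ B ⊆ I, ¬ IsBrokenCircuit M B

/-- A unidependent set: contains exactly one circuit. -/
def Unidep {n : ℕ} (M : Matroid (Fin n)) (U : Finset (Fin n)) : Prop :=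
  ↑U ⊆ M.E ∧ ∃! C : Finset (Fin n), C ⊆ U ∧ IsCircuit M C

/-- x is a loop. -/
def IsLoopM {n : ℕ} (M : Matroid (Fin n)) (x : Fin n) : Prop := M.Dep {x}

/-- Deletion of a single element. -/
noncomputable def mdel {n : ℕ} (M : Matroid (Fin n)) (x : Fin n) : Matroid (Fin n) :=
  M ↾ (M.E \ {x})

/-- Contraction of a single element, via duality. -/
noncomputable def mcon {n : ℕ} (M : Matroid (Fin n)) (x : Fin n) : Matroid (Fin n) :=
  (M✶ ↾ (M.E \ {x}))✶

open scoped Classical in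
/-- The rank of a finite set: maximal cardinality of an independent subset. -/
noncomputable def rkFin {n : ℕ} (M : Matroid (Fin n)) (U : Finset (Fin n)) : ℕ :=
  (U.powerset.filter fun I : Finset (Fin n) => M.Indep (↑I : Set (Fin n))).sup Finset.card

/-- A simple matroid with ground set everything. -/
def SimpleGround {n : ℕ} (M : Matroid (Fin n)) : Prop :=
  M.E = Set.univ ∧ (∀ i : Fin n, M.Indep {i}) ∧
    ∀ i j : Fin n, i ≠ j → M.Indep {i, j}

/-- Number of inversions of a list. -/
def listInv {n : ℕ} : List (Fin n) → ℕ
  | [] => 0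
  | a :: t => (t.countP fun b => decide (b < a)) + listInv t

/-- χ evaluated on an ordered set, with the sign convention χ(X^σ) = sgn(σ) χ(X). -/
def ochi {n : ℕ} {K : Type*} [Field K] (χ : Finset (Fin n) → K) (l : List (Fin n)) : K :=
  (-1 : K) ^ listInv l * χ l.toFinset

/-- The flag of flats associated to an ordered set: closures of its suffixes. -/
def flagOf {n : ℕ} (M : Matroid (Fin n)) (l : List (Fin n)) : List (Set (Fin n)) :=
  l.tails.map fun t => M.closure ↑t.toFinset

/-- An element `b` is active in `I`: it lies in `cl(I) \ I` and is the minimum of the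
(unique) circuit contained in `I ∪ {b}`. -/
def ActiveIn {n : ℕ} (M : Matroid (Fin n)) (I : Finset (Fin n)) (b : Fin n) : Prop :=
  b ∈ M.closure ↑I ∧ b ∉ I ∧
    ∃ C : Finset (Fin n), C ⊆ insert b I ∧ IsCircuit M C ∧ ∀ c ∈ C, b ≤ c


/-- An inactive unidependent set: `min C(U)` is the minimal active element of
`U \\ min C(U)`. -/
def InactiveUnidep {n : ℕ} (M : Matroid (Fin n)) (U : Finset (Fin n)) : Prop :=
  Unidep M U ∧ ∃ (C : Finset (Fin n)) (a : Fin n), C ⊆ U ∧ IsCircuit M C ∧ a ∈ C ∧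
    (∀ b ∈ C, a ≤ b) ∧ ∀ b : Fin n, ActiveIn M (U.erase a) b → a ≤ b

section Alg

variable {n : ℕ} {K : Type*} [Field K]

/-- The defining relations of the graded algebra `E`: squares of generators vanish and
generators commute up to the nonzero scalars `β i j` (for `i < j`). -/
inductive ERel (n : ℕ) (K : Type*) [Field K] (β : Fin n → Fin n → K) :
    FreeAlgebra K (Fin n) → FreeAlgebra K (Fin n) → Prop
  | sq (i : Fin n) : ERel n K β (FreeAlgebra.ι K i * FreeAlgebra.ι K i) 0
  | comm {i j : Fin n} (h : i < j) :
      ERel n K β (FreeAlgebra.ι K j * FreeAlgebra.ι K i)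
        (β i j • (FreeAlgebra.ι K i * FreeAlgebra.ι K j))

/-- The algebra `E` generated by `e_1, …, e_n` with `e_i² = 0`, `e_j e_i = β i j • e_i e_j`. -/
abbrev EAlg (n : ℕ) (K : Type*) [Field K] (β : Fin n → Fin n → K) := RingQuot (ERel n K β)

/-- The generator `e_i` of `E`. -/
noncomputable def gen (β : Fin n → Fin n → K) (i : Fin n) : EAlg n K β :=
  RingQuot.mkAlgHom K (ERel n K β) (FreeAlgebra.ι K i)

/-- `e_X`: the product of the generators indexed by `X`, in increasing order. -/
noncomputable def eset (β : Fin n → Fin n → K) (X : Finset (Fin n)) : EAlg n K β :=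
  ((X.sort (· ≤ ·)).map (gen β)).prod

/-- The χ-boundary `∂e_X = Σ_p (-1)^p χ(X \ i_p) e_{X \ i_p}` (with `X = {i_1 < … < i_m}`,
`p` running from 1 to m). -/
noncomputable def bdry (β : Fin n → Fin n → K) (χ : Finset (Fin n) → K)
    (X : Finset (Fin n)) : EAlg n K β :=
  (((X.sort (· ≤ ·)).zipIdx.map Prod.swap).map fun pi =>
    ((-1 : K) ^ (pi.1 + 1) * χ (X.erase pi.2)) • eset β (X.erase pi.2)).sum

end Alg

section Chi

variable {n : ℕ} {K : Type*} [Field K]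

/-- Condition (UC1). -/
def UC1 (M : Matroid (Fin n)) (χ : Finset (Fin n) → K) : Prop :=
  ∀ I : Finset (Fin n), χ I ≠ 0 ↔ M.Indep ↑I

/-- Condition (UC2). -/
def UC2 (β : Fin n → Fin n → K) (M : Matroid (Fin n)) (χ : Finset (Fin n) → K) : Prop :=
  ∀ U U' : Finset (Fin n), Unidep M U → Unidep M U' → U' ⊆ U →
    ∃ ε : K, ε ≠ 0 ∧ bdry β χ U = ε • (bdry β χ U' * eset β (U \ U'))

/-- The (right) ideal `I_χ(M)` of `E`, as a `K`-subspace: it is spanned by the products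
of the boundaries of circuits of size `> 1` (and of the generators indexed by loops)
with arbitrary elements of `E`. -/
noncomputable def chiIdeal (β : Fin n → Fin n → K) (M : Matroid (Fin n))
    (χ : Finset (Fin n) → K) : Submodule K (EAlg n K β) :=
  Submodule.span K
    ({ y | ∃ C : Finset (Fin n), IsCircuit M C ∧ 1 < C.card ∧
        ∃ z : EAlg n K β, y = bdry β χ C * z } ∪
     { y | ∃ i : Fin n, IsCircuit M {i} ∧ ∃ z : EAlg n K β, y = gen β i * z })

/-- The χ-algebra `A_χ(M) = E / I_χ(M)` (as a `K`-vector space). -/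
abbrev AChi (β : Fin n → Fin n → K) (M : Matroid (Fin n)) (χ : Finset (Fin n) → K) :=
  EAlg n K β ⧸ chiIdeal β M χ

/-- The residue class `[e_X]` in `A_χ(M)`. -/
noncomputable def cls (β : Fin n → Fin n → K) (M : Matroid (Fin n))
    (χ : Finset (Fin n) → K) (X : Finset (Fin n)) : AChi β M χ :=
  Submodule.Quotient.mk (eset β X)

/-- The induced map `χ_{M/x}`, `I ↦ χ(I * x)`. -/
def chiC (χ : Finset (Fin n) → K) (x : Fin n) : Finset (Fin n) → K :=
  fun I => ochi χ (I.sort (· ≤ ·) ++ [x])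

/-- Iterated single-element contraction along a list (the head is contracted last). -/
noncomputable def contrList (M : Matroid (Fin n)) : List (Fin n) → Matroid (Fin n)
  | [] => M
  | x :: t => mcon (contrList M t) x

/-- Iterated induced `χ` along a list. -/
def chiL (χ : Finset (Fin n) → K) : List (Fin n) → (Finset (Fin n) → K)
  | [] => χ
  | x :: t => chiC (chiL χ t) x

/-- The iterated residue `p_{I^σ} = p_{i_{σ(1)}} ∘ ⋯ ∘ p_{i_{σ(ℓ)}}` associated to a family
`P` of single-element residue maps and an ordered set (a list). -/
noncomputable def pIter (β : Fin n → Fin n → K)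
    (P : ∀ (M : Matroid (Fin n)) (χ : Finset (Fin n) → K) (x : Fin n),
      AChi β M χ →ₗ[K] AChi β (mcon M x) (chiC χ x))
    (M : Matroid (Fin n)) (χ : Finset (Fin n) → K) :
    (l : List (Fin n)) → (AChi β M χ →ₗ[K] AChi β (contrList M l) (chiL χ l))
  | [] => LinearMap.id
  | x :: t => (P (contrList M t) (chiL χ t) x).comp (pIter β P M χ t)

/-- The defining property of the residue map `p_x` on (classes of) independent sets. -/
def ResFormula (β : Fin n → Fin n → K)
    (P : ∀ (M : Matroid (Fin n)) (χ : Finset (Fin n) → K) (x : Fin n),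
      AChi β M χ →ₗ[K] AChi β (mcon M x) (chiC χ x)) : Prop :=
  ∀ (M : Matroid (Fin n)) (χ : Finset (Fin n) → K) (x : Fin n), ¬ IsLoopM M x →
    ∀ I : Finset (Fin n), M.Indep ↑I →
      (x ∈ I → P M χ x (cls β M χ I) = cls β (mcon M x) (chiC χ x) (I.erase x)) ∧
      (∀ y ∈ I, IsCircuit M {x, y} → P M χ x (cls β M χ I) =
        (ochi χ ((I.erase y).sort (· ≤ ·) ++ [x]) /
          ochi χ ((I.erase y).sort (· ≤ ·) ++ [y])) •
            cls β (mcon M x) (chiC χ x) (I.erase y)) ∧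
      (x ∉ I → (∀ y ∈ I, ¬ IsCircuit M {x, y}) → P M χ x (cls β M χ I) = 0)

end Chi

/-!
Deleting `x` keeps exactly the circuits avoiding `x`. A circuit through the maximal element `x`
with more than one element has its minimum elsewhere, so its broken circuit still contains `x`;
hence the broken circuits avoiding `x` are the same in `M` and `M \ x`.
-/

section Deletion

variable {n : ℕ} {M : Matroid (Fin n)} {x : Fin n}

lemma mdel_eq_delete (M : Matroid (Fin n)) (x : Fin n) : mdel M x = M ＼ {x} := rfl

lemma mdel_indep_iff {I : Set (Fin n)} : (mdel M x).Indep I ↔ M.Indep I ∧ x ∉ I := by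
  rw [mdel_eq_delete, Matroid.delete_indep_iff, Set.disjoint_singleton_right]

lemma mdel_dep_iff {S : Set (Fin n)} : (mdel M x).Dep S ↔ M.Dep S ∧ x ∉ S := by
  rw [mdel_eq_delete, Matroid.delete_dep_iff, Set.disjoint_singleton_right]

lemma isCircuit_mdel_iff {C : Finset (Fin n)} :
    IsCircuit (mdel M x) C ↔ IsCircuit M C ∧ x ∉ C := by
  simp only [IsCircuit, mdel_dep_iff, Finset.mem_coe]
  constructor
  · rintro ⟨⟨hdep, hxC⟩, hmin⟩
    exact ⟨⟨hdep, fun D hDC hD => hmin D hDC ⟨hD, fun hxD => hxC (hDC.subset hxD)⟩⟩, hxC⟩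
  · rintro ⟨⟨hdep, hmin⟩, hxC⟩
    exact ⟨⟨hdep, hxC⟩, fun D hDC hD => hmin D hDC hD.1⟩

lemma isBrokenCircuit_mdel_iff (hmax : ∀ y : Fin n, y ≤ x) {B : Finset (Fin n)} (hxB : x ∉ B) :
    IsBrokenCircuit (mdel M x) B ↔ IsBrokenCircuit M B := by
  refine exists₂_congr fun C a => ?_
  rw [isCircuit_mdel_iff, and_assoc]
  refine and_congr_right fun _ => ⟨And.right, fun h => ⟨?_, h⟩⟩
  obtain ⟨hcard, -, hamin, rfl⟩ := h
  refine fun hxC => hxB (Finset.mem_erase.2 ⟨fun hxa => ?_, hxC⟩)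
  have hCx : C ⊆ {x} := fun b hb =>
    Finset.mem_singleton.2 (le_antisymm (hmax b) (hxa ▸ hamin b hb))
  exact absurd (Finset.card_le_card hCx) (by simpa using hcard)

end Deletion

theorem nbc_delete_max_general {n : ℕ} (M : Matroid (Fin n)) (x : Fin n)
    (hmax : ∀ y : Fin n, y ≤ x)
    (X : Finset (Fin n)) (hX : x ∉ X) :
    NBCSet (mdel M x) X ↔ NBCSet M X := by
  refine and_congr (mdel_indep_iff.trans (and_iff_left hX)) (forall₂_congr fun B hBX => ?_)
  rw [isBrokenCircuit_mdel_iff hmax fun hxB => hX (hBX hxB)]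

/-- for the maximal element `x` (not a loop), the NBC sets of `M \ x` are
exactly the NBC sets of `M` avoiding `x`. -/
theorem nbc_delete_max {n : ℕ} (M : Matroid (Fin n)) (hE : M.E = Set.univ) (x : Fin n)
    (hmax : ∀ y : Fin n, y ≤ x) (hl : ¬ IsLoopM M x)
    (X : Finset (Fin n)) (hX : x ∉ X) :
    NBCSet (mdel M x) X ↔ NBCSet M X :=
  nbc_delete_max_general M x hmax X hX
end

section
/- Let M be a simple matroid on a linearly ordered ground set E with maximal element n. Then the NBC sets of M are exactly the disjoint union of the NBC sets of M \ n and the sets I ∪ {n} where I is an NBC set of M/n. Equivalently: NBC(M) = NBC(M\n) ⊎ { I ∪ {n} : I ∈ NBC(M/n) }. -/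
open scoped BigOperators
open scoped Matroid

/-!
If `x ∉ X`, every circuit whose broken circuit lies in `X` avoids `x` (its minimum is not the
maximum `x`, as circuits have at least two elements), so the broken circuits inside `X` are the
same for `M` and `M ＼ {x}`. If `X = insert x I`, broken circuits of `M` inside `X` and of
`M ／ {x}` inside `I` produce each other: a circuit `C` of one matroid gives a dependent set of
the other (`C \ {x}` in `M ／ {x}`, `C ∪ {x}` in `M`); a circuit `C'` inside it has a minimum
`a' ≠ x` since neither matroid has loops, and `C' \ {a'}` lies in `(C \ {min C}) ∪ {x}`.
-/

open Finset

namespace Finset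

variable {α : Type*} [LinearOrder α]

lemma ne_of_isTop_of_one_lt_card {C : Finset α} {a x : α} (hx : IsTop x) (hC : 1 < #C)
    (ha : ∀ b ∈ C, a ≤ b) : a ≠ x := by
  rintro rfl
  obtain ⟨b, hb, c, hc, hbc⟩ := one_lt_card.1 hC
  exact hbc (((hx b).antisymm (ha b hb)).trans ((hx c).antisymm (ha c hc)).symm)

lemma erase_subset_insert_erase_of_forall_le {C C' : Finset α} {a a' x : α}
    (hC' : C' ⊆ insert x C) (ha' : a' ∈ C') (ha'x : a' ≠ x) (ha'min : ∀ b ∈ C', a' ≤ b)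
    (hamin : ∀ b ∈ C, a ≤ b) : C'.erase a' ⊆ insert x (C.erase a) := by
  intro y hy
  obtain ⟨hya', hyC'⟩ := mem_erase.1 hy
  obtain rfl | hyC := mem_insert.1 (hC' hyC')
  · exact mem_insert_self _ _
  · have ha'C : a' ∈ C := (mem_insert.1 (hC' ha')).resolve_left ha'x
    refine mem_insert_of_mem (mem_erase.2 ⟨?_, hyC⟩)
    rintro rfl
    exact hya' ((ha'min y hyC').antisymm (hamin a' ha'C)).symm

end Finset

section Matroid

variable {n : ℕ} {M N : Matroid (Fin n)} {x : Fin n}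

lemma isCircuit_iff_isCircuit_coe {C : Finset (Fin n)} : IsCircuit M C ↔ M.IsCircuit ↑C := by
  rw [Matroid.isCircuit_iff_forall_ssubset]
  refine and_congr_right fun hC =>
    ⟨fun h I hI => ?_, fun h D hD => (h (coe_ssubset.2 hD)).not_dep⟩
  obtain ⟨D, rfl⟩ := (C.finite_toSet.subset hI.subset).exists_finset_coe
  exact (Matroid.not_dep_iff (hI.subset.trans hC.subset_ground)).1 (h D (coe_ssubset.1 hI))

lemma exists_isCircuit_subset_of_dep {D : Finset (Fin n)} (hD : M.Dep ↑D) :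
    ∃ C ⊆ D, IsCircuit M C := by
  obtain ⟨C, hCD, hC⟩ := hD.exists_isCircuit_subset
  obtain ⟨C, rfl⟩ := (D.finite_toSet.subset hCD).exists_finset_coe
  exact ⟨C, coe_subset.1 hCD, isCircuit_iff_isCircuit_coe.2 hC⟩

lemma one_lt_card_of_isCircuit [M.Loopless] {C : Finset (Fin n)} (hC : IsCircuit M C) :
    1 < #C := by
  rw [one_lt_card_iff_nontrivial]
  exact Matroid.loopless_iff_forall_isCircuit.1 ‹_› _ (isCircuit_iff_isCircuit_coe.1 hC)

lemma exists_isBrokenCircuit_subset_insert_erase [N.Loopless] (hx : IsTop x)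
    {C D : Finset (Fin n)} {a : Fin n} (hD : N.Dep ↑D) (hDC : D ⊆ insert x C)
    (hamin : ∀ b ∈ C, a ≤ b) :
    ∃ B ⊆ insert x (C.erase a), B ⊆ D ∧ IsBrokenCircuit N B := by
  obtain ⟨C', hC'D, hC'⟩ := exists_isCircuit_subset_of_dep hD
  have hcard := one_lt_card_of_isCircuit hC'
  have hne : C'.Nonempty := card_pos.1 (by omega)
  have ha'min : ∀ b ∈ C', C'.min' hne ≤ b := fun b hb => C'.min'_le b hb
  refine ⟨C'.erase (C'.min' hne), erase_subset_insert_erase_of_forall_le (hC'D.trans hDC)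
    (C'.min'_mem hne) (ne_of_isTop_of_one_lt_card hx hcard ha'min) ha'min hamin,
    (erase_subset _ _).trans hC'D, C', C'.min' hne, hC', hcard, C'.min'_mem hne, ha'min, rfl⟩

lemma isBrokenCircuit_deleteElem_iff (hx : IsTop x) {B : Finset (Fin n)} (hxB : x ∉ B) :
    IsBrokenCircuit (M ＼ {x}) B ↔ IsBrokenCircuit M B := by
  refine exists_congr fun C => exists_congr fun a =>
    and_congr_left fun ⟨hcard, _, hamin, hB⟩ => ?_
  have hxC : x ∉ C := fun hxC =>
    hxB (hB ▸ mem_erase.2 ⟨(ne_of_isTop_of_one_lt_card hx hcard hamin).symm, hxC⟩)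
  rw [isCircuit_iff_isCircuit_coe, isCircuit_iff_isCircuit_coe, Matroid.delete_isCircuit_iff,
    Set.disjoint_singleton_right, and_iff_left (by simpa using hxC)]

lemma nbcSet_deleteElem_iff (hx : IsTop x) {X : Finset (Fin n)} (hxX : x ∉ X) :
    NBCSet (M ＼ {x}) X ↔ NBCSet M X := by
  rw [NBCSet, NBCSet, Matroid.deleteElem_indep_iff,
    and_iff_left (show x ∉ (X : Set (Fin n)) by simpa using hxX)]
  exact and_congr_right fun _ => forall₂_congr fun B hB =>
    not_congr (isBrokenCircuit_deleteElem_iff hx fun h => hxX (hB h))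

lemma IsCircuit.contractElem_dep_erase (hx : M.IsNonloop x) {C : Finset (Fin n)}
    (hC : IsCircuit M C) : (M ／ {x}).Dep ↑(C.erase x) := by
  have hC' := isCircuit_iff_isCircuit_coe.1 hC
  rw [hx.indep.contract_dep_iff, coe_erase, Set.sdiff_union_self]
  exact ⟨Set.disjoint_sdiff_left, hC'.dep.superset Set.subset_union_left⟩

lemma IsCircuit.dep_insert_of_contractElem (hx : M.IsNonloop x) {C : Finset (Fin n)}
    (hC : IsCircuit (M ／ {x}) C) : M.Dep ↑(insert x C) := by
  have hdep := (isCircuit_iff_isCircuit_coe.1 hC).dep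
  rw [hx.indep.contract_dep_iff, Set.union_singleton] at hdep
  rw [coe_insert]
  exact hdep.2

lemma nbcSet_contractElem_iff [M.Loopless] [(M ／ {x}).Loopless] (hx : M.IsNonloop x)
    (hxtop : IsTop x) {I : Finset (Fin n)} (hxI : x ∉ I) :
    NBCSet (M ／ {x}) I ↔ NBCSet M (insert x I) := by
  rw [NBCSet, NBCSet, hx.contractElem_indep_iff, coe_insert,
    and_iff_right (show x ∉ (I : Set (Fin n)) by simpa using hxI)]
  refine and_congr_right fun _ => ⟨fun h B hBI hB => ?_, fun h B hBI hB => ?_⟩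
  · obtain ⟨C, a, hC, -, -, hamin, rfl⟩ := hB
    obtain ⟨B', hB'C, hB'D, hB'⟩ := exists_isBrokenCircuit_subset_insert_erase hxtop
      (hC.contractElem_dep_erase hx) ((erase_subset _ _).trans (subset_insert _ _)) hamin
    refine h B' (fun y hy => ?_) hB'
    obtain ⟨hyx, -⟩ := mem_erase.1 (hB'D hy)
    exact (mem_insert.1 (hBI ((mem_insert.1 (hB'C hy)).resolve_left hyx))).resolve_left hyx
  · obtain ⟨C, a, hC, -, -, hamin, rfl⟩ := hB
    obtain ⟨B', hB'C, -, hB'⟩ := exists_isBrokenCircuit_subset_insert_erase hxtop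
      (hC.dep_insert_of_contractElem hx) subset_rfl hamin
    exact h B' (hB'C.trans (insert_subset_insert x hBI)) hB'

lemma SimpleGround.loopless (hM : SimpleGround M) : M.Loopless :=
  Matroid.loopless_iff_forall_isNonloop.2 fun i _ => Matroid.indep_singleton.1 (hM.2.1 i)

lemma SimpleGround.contractElem_loopless (hM : SimpleGround M) (x : Fin n) :
    (M ／ {x}).Loopless := by
  refine Matroid.loopless_iff_forall_isNonloop.2 fun y hy => ?_
  have hyx : y ≠ x := hy.2
  rw [← Matroid.indep_singleton, (Matroid.indep_singleton.1 (hM.2.1 x)).contractElem_indep_iff,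
    Set.mem_singleton_iff]
  exact ⟨hyx.symm, hM.2.2 x y hyx.symm⟩

end Matroid

/-- for a simple matroid with maximal element `x`,
`NBC(M) = NBC(M\x) ⊎ { I ∪ {x} : I ∈ NBC(M/x) }`. -/
theorem nbc_decomposition {n : ℕ} (M : Matroid (Fin n)) (hM : SimpleGround M) (x : Fin n)
    (hmax : ∀ y : Fin n, y ≤ x) (X : Finset (Fin n)) :
    NBCSet M X ↔
      ((x ∉ X ∧ NBCSet (mdel M x) X) ∨
        (∃ I : Finset (Fin n), x ∉ I ∧ NBCSet (mcon M x) I ∧ X = insert x I)) := by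
  have : M.Loopless := hM.loopless
  have : (M ／ {x}).Loopless := hM.contractElem_loopless x
  have hx : M.IsNonloop x := Matroid.indep_singleton.1 (hM.2.1 x)
  by_cases hxX : x ∈ X
  · have hX : X = insert x (X.erase x) := (insert_erase hxX).symm
    have hcon := nbcSet_contractElem_iff hx hmax (notMem_erase x X)
    refine ⟨fun h => .inr ⟨X.erase x, notMem_erase x X, hcon.2 (hX ▸ h), hX⟩, ?_⟩
    rintro (⟨hxX', -⟩ | ⟨I, hxI, hI, rfl⟩)
    · exact absurd hxX hxX'
    · exact (nbcSet_contractElem_iff hx hmax hxI).1 hI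
  · have hins : ∀ I : Finset (Fin n), X ≠ insert x I :=
      fun I h => hxX (h ▸ mem_insert_self x I)
    simp only [hxX, not_false_eq_true, true_and, hins, and_false, exists_false, or_false]
    exact (nbcSet_deleteElem_iff hmax hxX).symm
end
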